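/- arXiv:2405.13439 — 3 statements merged into one kernel-verified Lean document; each statement's English description precedes it below -/
import Mathlib

section
/- For every permutation π_n ∈ S_n, out of the (n+1)² insertion cells in the graphical representation, exactly (n+1)(n − D_n) cells produce descent increment +1, where D_n is the number of descents of π_n. -/
/-- Number of descents of a permutation of `Fin n`. -/
def descNum {n : ℕ} (σ : Equiv.Perm (Fin n)) : ℕ :=
  (Finset.univ.filter fun p : Fin n × Fin n =>
    (p.1 : ℕ) + 1 = (p.2 : ℕ) ∧ σ p.2 < σ p.1).card

/-- Insertion of a point in cell `(k, ℓ)` of the graphical representation of `σ`: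
the new permutation sends `k ↦ ℓ` and otherwise acts as `σ` on the remaining
positions/values (via `succAbove`). -/
def insertPerm {n : ℕ} (σ : Equiv.Perm (Fin n)) (k ℓ : Fin (n + 1)) :
    Equiv.Perm (Fin (n + 1)) :=
  (finSuccEquiv' k).trans ((Equiv.optionCongr σ).trans (finSuccEquiv' ℓ).symm)

/-!
For `n ≥ 1`, frame the one-line notation of `σ ∈ S_n` by a sentinel `n` on the left and `-1` on
the right; the framed word has `D + 2` descents, and every insertion cell is a gap between two
neighbours `a` (left) and `b` (right) of it. Inserting the value `ℓ` into that gap (and shifting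
the values `≥ ℓ` up) replaces the pair `a b` by `a ℓ b`, so the descent count changes by
`[ℓ ≤ a] + [b < ℓ] - [b < a]`. Hence in a column the number of `ℓ ∈ [0, n]` giving `+1` is
`a - b` at a descent and `a - b + n + 1` at an ascent. Summing over the `n + 1` gaps, the
differences telescope to `n - (-1) = n + 1` and there are `n - 1 - D` ascents, so the total is
`(n + 1) + (n + 1)(n - 1 - D) = (n + 1)(n - D)`.
-/

open Finset Equiv

namespace List

theorem ofFn_insertNth {α : Type*} : ∀ {n : ℕ} (p : Fin (n + 1)) (x : α) (f : Fin n → α),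
    ofFn (Fin.insertNth p x f) = (ofFn f).insertIdx p x
  | 0, p, x, f => by
    obtain rfl := Fin.fin_one_eq_zero p
    simp [Fin.insertNth_zero']
  | n + 1, p, x, f => by
    cases p using Fin.cases with
    | zero => simp [Fin.insertNth_zero', ofFn_succ]
    | succ p =>
      conv_lhs => rw [← Fin.cons_self_tail f, Fin.insertNth_succ_cons, ofFn_cons]
      rw [ofFn_insertNth p x, ofFn_succ, Fin.val_succ, insertIdx_succ_cons]
      rfl

variable {α : Type*} [LinearOrder α]

def descents : List α → ℕ
  | a :: b :: l => (if b < a then 1 else 0) + descents (b :: l)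
  | _ => 0

theorem descents_map {β : Type*} [LinearOrder β] {f : α → β} (hf : StrictMono f) :
    ∀ l : List α, (l.map f).descents = l.descents
  | [] | [_] => rfl
  | a :: b :: l => by
    rw [map_cons, map_cons, descents, ← map_cons, descents_map hf (b :: l), descents]
    simp only [hf.lt_iff_lt]

theorem descents_insertIdx (x : α) :
    ∀ (l : List α) (i : ℕ) (hi : i + 1 < l.length),
      (l.insertIdx (i + 1) x).descents + (if l[i + 1] < l[i] then 1 else 0) =
        l.descents + (if x < l[i] then 1 else 0) + (if l[i + 1] < x then 1 else 0)
  | a :: b :: l, 0, _ => by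
    simp only [insertIdx_succ_cons, insertIdx_zero, descents, getElem_cons_succ,
      getElem_cons_zero]
    omega
  | a :: b :: l, i + 1, hi => by
    have := descents_insertIdx x (b :: l) i (by simpa using hi)
    simp only [insertIdx_succ_cons, descents, getElem_cons_succ] at this ⊢
    omega

theorem descents_ofFn {m : ℕ} (f : Fin (m + 1) → α) :
    (ofFn f).descents = #{i : Fin m | f i.succ < f i.castSucc} := by
  induction m with
  | zero => rfl
  | succ m ih =>
    rw [ofFn_succ, ofFn_succ, descents, ← ofFn_succ (f := fun i => f i.succ), ih, card_filter,
      card_filter, Fin.sum_univ_succ]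
    rfl

end List

theorem Fin.sum_castSucc_sub_succ {M : Type*} [AddCommGroup M] {n : ℕ} (f : Fin (n + 2) → M) :
    ∑ k : Fin (n + 1), (f k.castSucc - f k.succ) = f 0 - f (Fin.last _) := by
  have h := (Fin.sum_univ_succ f).symm.trans (Fin.sum_univ_castSucc f)
  rw [sum_sub_distrib, sub_eq_sub_iff_add_eq_add]
  exact h.symm

theorem card_filter_fin_eq_card_filter_Icc (n : ℕ) (P : ℤ → Prop) [DecidablePred P] :
    #{ℓ : Fin (n + 1) | P ℓ} = #{z ∈ Icc (0 : ℤ) n | P z} := by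
  refine card_nbij (fun ℓ => ((ℓ : ℕ) : ℤ)) ?_ ?_ ?_
  · intro ℓ hℓ
    rw [mem_coe, mem_filter] at hℓ ⊢
    dsimp only
    exact ⟨mem_Icc.2 ⟨by positivity, by exact_mod_cast ℓ.is_le⟩, hℓ.2⟩
  · intro ℓ _ ℓ' _ h
    exact Fin.ext (by simpa using h)
  · intro z hz
    rw [mem_coe, mem_filter, mem_Icc] at hz
    refine ⟨⟨z.toNat, by omega⟩, by simpa [Int.toNat_of_nonneg hz.1.1] using hz.2, ?_⟩
    simp [Int.toNat_of_nonneg hz.1.1]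

theorem card_filter_adds_one_descent (n : ℕ) {a b : ℤ} (ha : 0 ≤ a) (ha' : a ≤ n)
    (hb : -1 ≤ b) (hb' : b < n) (hab : a ≠ b) :
    (#{ℓ : Fin (n + 1) | (if (ℓ : ℤ) ≤ a then 1 else 0) + (if b < ℓ then 1 else 0) =
        (if b < a then 1 else 0) + 1} : ℤ) =
      a - b + (n + 1) * (if a < b then 1 else 0) := by
  have hIcc := card_filter_fin_eq_card_filter_Icc n fun z =>
    (if z ≤ a then 1 else 0) + (if b < z then 1 else 0) = (if b < a then 1 else 0) + 1
  rw [hIcc]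
  rcases lt_or_gt_of_ne hab with h | h
  · have hset : {z ∈ Icc (0 : ℤ) n | (if z ≤ a then 1 else 0) + (if b < z then 1 else 0) =
        (if b < a then 1 else 0) + 1} = Icc 0 a ∪ Ioc b n := by
      ext z
      simp only [mem_filter, mem_Icc, mem_union, mem_Ioc]
      split_ifs <;> omega
    rw [hset, card_union_of_disjoint, Int.card_Icc, Int.card_Ioc, if_pos h]
    · omega
    · exact disjoint_left.2 fun z hz hz' => by simp only [mem_Icc, mem_Ioc] at hz hz'; omega
  · have hset : {z ∈ Icc (0 : ℤ) n | (if z ≤ a then 1 else 0) + (if b < z then 1 else 0) =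
        (if b < a then 1 else 0) + 1} = Ioc b a := by
      ext z
      simp only [mem_filter, mem_Icc, mem_Ioc]
      split_ifs <;> omega
    rw [hset, Int.card_Ioc, if_neg (by omega)]
    omega

def succAboveInt (x v : ℤ) : ℤ := if v < x then v else v + 1

theorem strictMono_succAboveInt (x : ℤ) : StrictMono (succAboveInt x) := by
  intro v w h
  unfold succAboveInt
  split_ifs <;> omega

theorem lt_succAboveInt_iff {x v : ℤ} : x < succAboveInt x v ↔ x ≤ v := by
  unfold succAboveInt
  split_ifs <;> omega

theorem succAboveInt_lt_iff {x v : ℤ} : succAboveInt x v < x ↔ v < x := by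
  unfold succAboveInt
  split_ifs <;> omega

theorem Fin.val_succAbove_eq_succAboveInt {n : ℕ} (p : Fin (n + 1)) (i : Fin n) :
    ((p.succAbove i : ℕ) : ℤ) = succAboveInt p i := by
  unfold Fin.succAbove succAboveInt
  split_ifs <;> simp_all [Fin.lt_def]
  omega

theorem insertPerm_eq_insertNth {n : ℕ} (σ : Perm (Fin n)) (k ℓ : Fin (n + 1)) :
    ⇑(insertPerm σ k ℓ) = Fin.insertNth k ℓ (ℓ.succAbove ∘ σ) := by
  ext i
  cases i using Fin.succAboveCases k <;>
    simp [insertPerm, finSuccEquiv'_at, finSuccEquiv'_succAbove]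

theorem descNum_eq_card {m : ℕ} (σ : Perm (Fin (m + 1))) :
    descNum σ = #{i : Fin m | σ i.succ < σ i.castSucc} := by
  unfold descNum
  refine (card_nbij (fun i => (i.castSucc, i.succ)) ?_ ?_ ?_).symm
  · intro i hi
    simpa using hi
  · intro i _ j _ h
    simpa using congrArg Prod.fst h
  · rintro ⟨p, q⟩ hpq
    obtain ⟨hsucc, hdesc⟩ : (p : ℕ) + 1 = q ∧ σ q < σ p := by simpa using hpq
    have hp : p ≠ Fin.last m := by
      rintro rfl
      simp only [Fin.val_last] at hsucc
      omega
    have hq : (p.castPred hp).succ = q := Fin.ext (by simpa using hsucc)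
    exact ⟨p.castPred hp, by simpa [hq] using hdesc, by simp [hq]⟩

def borderedWord {n : ℕ} (σ : Perm (Fin n)) : Fin (n + 2) → ℤ :=
  Fin.cons (n : ℤ) (Fin.snoc (fun i => (σ i : ℤ)) (-1))

section borderedWord

variable {n : ℕ} (σ : Perm (Fin n))

@[simp] theorem borderedWord_zero : borderedWord σ 0 = n := rfl

@[simp] theorem borderedWord_last : borderedWord σ (Fin.last (n + 1)) = -1 := by
  simp [borderedWord, ← Fin.succ_last]

@[simp] theorem borderedWord_castSucc_succ (i : Fin n) :
    borderedWord σ i.castSucc.succ = σ i := by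
  simp [borderedWord]

@[simp] theorem borderedWord_succ_castSucc (i : Fin n) :
    borderedWord σ i.succ.castSucc = σ i :=
  borderedWord_castSucc_succ σ i

theorem borderedWord_injective : Function.Injective (borderedWord σ) := by
  have hσ : Function.Injective fun i => (σ i : ℤ) := fun i j h =>
    σ.injective (Fin.ext (by simpa using h))
  refine Fin.cons_injective_iff.2 ⟨?_, Fin.snoc_injective_iff.2 ⟨hσ, ?_⟩⟩
  · rintro ⟨i, hi⟩
    cases i using Fin.lastCases with
    | last => simp at hi
    | cast i =>
      simp at hi
      omega
  · rintro ⟨i, hi⟩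
    simp at hi

theorem borderedWord_mem_Icc (i : Fin (n + 2)) : borderedWord σ i ∈ Icc (-1) (n : ℤ) := by
  cases i using Fin.cases with
  | zero => simp
  | succ i =>
    cases i using Fin.lastCases with
    | last => simp [Fin.succ_last]
    | cast j =>
      simp only [borderedWord_castSucc_succ, mem_Icc]
      omega

theorem borderedWord_insertPerm (k ℓ : Fin (n + 1)) :
    borderedWord (insertPerm σ k ℓ) =
      Fin.insertNth k.succ.castSucc (ℓ : ℤ) (succAboveInt ℓ ∘ borderedWord σ) := by
  ext i
  cases i using Fin.succAboveCases k.succ.castSucc with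
  | x => simp [borderedWord, insertPerm_eq_insertNth]
  | p i =>
    rw [Fin.insertNth_apply_succAbove, Function.comp_apply, ← Fin.succ_castSucc]
    cases i using Fin.cases with
    | zero =>
      rw [Fin.succ_succAbove_zero]
      simp [succAboveInt, ℓ.is_le]
    | succ i =>
      cases i using Fin.lastCases with
      | last =>
        rw [Fin.succ_last, Fin.succ_castSucc,
          Fin.succAbove_castSucc_of_le _ _ (Fin.le_last _), Fin.succ_last]
        simp [succAboveInt]
        omega
      | cast j =>
        rw [Fin.succ_succAbove_succ, Fin.castSucc_succAbove_castSucc]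
        simp [insertPerm_eq_insertNth, Fin.val_succAbove_eq_succAboveInt]

end borderedWord

theorem card_borderedWord_descents {m : ℕ} (σ : Perm (Fin (m + 1))) :
    #{k : Fin (m + 2) | borderedWord σ k.succ < borderedWord σ k.castSucc} = descNum σ + 2 := by
  have hfirst :
      borderedWord σ (0 : Fin (m + 2)).succ < borderedWord σ (0 : Fin (m + 2)).castSucc :=
    show ((σ 0 : ℕ) : ℤ) < ((m + 1 : ℕ) : ℤ) by exact_mod_cast (σ 0).isLt
  have hlast :
      borderedWord σ (Fin.last m).succ.succ < borderedWord σ (Fin.last m).succ.castSucc := by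
    rw [borderedWord_succ_castSucc, Fin.succ_last, Fin.succ_last, borderedWord_last]
    omega
  have hmid (i : Fin m) : borderedWord σ i.castSucc.succ.succ = σ i.succ ∧
      borderedWord σ i.castSucc.succ.castSucc = σ i.castSucc :=
    ⟨borderedWord_castSucc_succ σ i.succ, borderedWord_castSucc_succ σ i.castSucc⟩
  rw [descNum_eq_card, card_filter, card_filter, Fin.sum_univ_succ, Fin.sum_univ_castSucc,
    if_pos hfirst, if_pos hlast]
  simp only [hmid, Nat.cast_lt, Fin.val_fin_lt]
  omega

theorem card_borderedWord_ascents {m : ℕ} (σ : Perm (Fin (m + 1))) :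
    (#{k : Fin (m + 2) | borderedWord σ k.castSucc < borderedWord σ k.succ} : ℤ) =
      m - descNum σ := by
  have hsplit := card_filter_add_card_filter_not (s := univ)
    fun k : Fin (m + 2) => borderedWord σ k.succ < borderedWord σ k.castSucc
  have hflip : ∀ k : Fin (m + 2), ¬borderedWord σ k.succ < borderedWord σ k.castSucc ↔
      borderedWord σ k.castSucc < borderedWord σ k.succ := fun k =>
    not_lt.trans ((borderedWord_injective σ).ne Fin.castSucc_lt_succ.ne).le_iff_lt
  simp only [hflip, card_borderedWord_descents, card_univ, Fintype.card_fin] at hsplit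
  omega

theorem descNum_insertPerm {m : ℕ} (σ : Perm (Fin (m + 1))) (k ℓ : Fin (m + 2)) :
    descNum (insertPerm σ k ℓ) +
        (if borderedWord σ k.succ < borderedWord σ k.castSucc then 1 else 0) =
      descNum σ + (if (ℓ : ℤ) ≤ borderedWord σ k.castSucc then 1 else 0) +
        (if borderedWord σ k.succ < ℓ then 1 else 0) := by
  set L := List.ofFn (succAboveInt ℓ ∘ borderedWord σ) with hL
  have hk : (k : ℕ) + 1 < L.length := by
    simp only [hL, List.length_ofFn]
    omega
  have key := List.descents_insertIdx (ℓ : ℤ) L k hk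
  have hword :
      L.insertIdx (k + 1) (ℓ : ℤ) = List.ofFn (borderedWord (insertPerm σ k ℓ)) := by
    rw [borderedWord_insertPerm, List.ofFn_insertNth]
    rfl
  have hdesc : L.descents = descNum σ + 2 := by
    rw [hL, ← List.map_ofFn, List.descents_map (strictMono_succAboveInt _), List.descents_ofFn,
      card_borderedWord_descents]
  have hleft : L[(k : ℕ)] = succAboveInt ℓ (borderedWord σ k.castSucc) := List.getElem_ofFn ..
  have hright : L[(k : ℕ) + 1] = succAboveInt ℓ (borderedWord σ k.succ) := List.getElem_ofFn ..
  rw [hword, List.descents_ofFn, card_borderedWord_descents] at key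
  simp only [hleft, hright, hdesc, (strictMono_succAboveInt _).lt_iff_lt, lt_succAboveInt_iff,
    succAboveInt_lt_iff] at key
  omega

theorem card_insertPerm_column {m : ℕ} (σ : Perm (Fin (m + 1))) (k : Fin (m + 2)) :
    (#{ℓ : Fin (m + 2) | descNum (insertPerm σ k ℓ) = descNum σ + 1} : ℤ) =
      borderedWord σ k.castSucc - borderedWord σ k.succ +
        (m + 2) * (if borderedWord σ k.castSucc < borderedWord σ k.succ then 1 else 0) := by
  have hne : borderedWord σ k.castSucc ≠ borderedWord σ k.succ :=
    (borderedWord_injective σ).ne Fin.castSucc_lt_succ.ne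
  have ha : borderedWord σ k.castSucc ≠ -1 := by
    rw [← borderedWord_last σ]
    exact (borderedWord_injective σ).ne (Fin.castSucc_lt_last k).ne
  have hb : borderedWord σ k.succ ≠ ((m + 1 : ℕ) : ℤ) := by
    rw [← borderedWord_zero σ]
    exact (borderedWord_injective σ).ne (Fin.succ_ne_zero k)
  have hai := mem_Icc.1 (borderedWord_mem_Icc σ k.castSucc)
  have hbi := mem_Icc.1 (borderedWord_mem_Icc σ k.succ)
  have hcount := card_filter_adds_one_descent (m + 1) (a := borderedWord σ k.castSucc)
    (b := borderedWord σ k.succ) (by omega) hai.2 hbi.1 (by omega) hne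
  rw [show (m : ℤ) + 2 = ((m + 1 : ℕ) : ℤ) + 1 by push_cast; ring, ← hcount]
  congr 2
  refine filter_congr fun ℓ _ => ?_
  have := descNum_insertPerm σ k ℓ
  omega

/-- Out of the `(n+1)²` insertion cells, exactly `(n+1)(n - D_n)` produce descent
increment `+1`. -/
theorem stmt_13 (n : ℕ) (σ : Equiv.Perm (Fin n)) :
    ((Finset.univ.filter fun c : Fin (n + 1) × Fin (n + 1) =>
        descNum (insertPerm σ c.1 c.2) = descNum σ + 1).card : ℤ) =
      ((n : ℤ) + 1) * ((n : ℤ) - descNum σ) := by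
  cases n with
  | zero => simp [descNum]
  | succ m =>
    have hcols : (#{c : Fin (m + 2) × Fin (m + 2) |
        descNum (insertPerm σ c.1 c.2) = descNum σ + 1} : ℤ) =
        ∑ k, (#{ℓ | descNum (insertPerm σ k ℓ) = descNum σ + 1} : ℤ) := by
      rw [card_filter, Fintype.sum_prod_type, Nat.cast_sum]
      simp only [card_filter]
    rw [hcols]
    simp only [card_insertPerm_column, sum_add_distrib, ← mul_sum, Fin.sum_castSucc_sub_succ,
      sum_boole, card_borderedWord_ascents, borderedWord_zero, borderedWord_last]
    push_cast
    ring
end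

section
/- Let (D_n, D'_n) be the descent and inverse-descent counts of a uniform random permutation, and let F_n be the generated filtration. Then M_n = n·(D_n − (n−1)/2, D'_n − (n−1)/2) is a martingale: E[D_{n+1} | F_n] = D_n + (n − D_n)/(n+1) and E[D'_{n+1} | F_n] = D'_n + (n − D'_n)/(n+1). -/
/-!
Count the triples `(k, ℓ, j)` for which inserting at cell `(k, ℓ)` creates a descent at the
adjacent positions `j, j + 1`. If `k` is one of these two positions, one of the two entries is
the new value `ℓ`, and the two choices of `k` together give a descent for exactly `n + 1` values
of `ℓ`. Otherwise insertion preserves relative order, so the pair is a descent for all `n + 1`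
values of `ℓ` or for none, according to the old pair it comes from; every old descent survives
the `n` insertion positions that do not split it. Hence `∑ des = (n + 1) (n + n des σ)`, and
inverse descents follow from `(insertPerm σ k ℓ)⁻¹ = insertPerm σ⁻¹ ℓ k`.
-/

open Finset

lemma Fin.sum_univ_eq_sum_Iio_add_add_sum_Ioi {M : Type*} [AddCommMonoid M] {n : ℕ}
    (f : Fin (n + 2) → M) (j : Fin (n + 1)) :
    ∑ k, f k =
      ∑ k ∈ Iio j.castSucc, f k + f j.castSucc + f j.succ + ∑ k ∈ Ioi j.succ, f k := by
  have : Ioi j.castSucc = Ici j.succ := by ext k; simp [Fin.castSucc_lt_iff_succ_le]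
  rw [← sum_filter_add_sum_filter_not univ (· < j.castSucc)]
  simp only [not_lt, filter_gt_eq_Iio, filter_le_eq_Ici, ← add_sum_Ioi_eq_sum_Ici, this,
    add_assoc]

lemma Fin.card_succAbove_lt {n : ℕ} (a : Fin n) :
    #{ℓ : Fin (n + 1) | ℓ.succAbove a < ℓ} = n - a := by
  simp [Fin.succAbove_lt_iff_castSucc_lt, filter_lt_eq_Ioi]

lemma Fin.card_lt_succAbove {n : ℕ} (a : Fin n) :
    #{ℓ : Fin (n + 1) | ℓ < ℓ.succAbove a} = a + 1 := by
  simp [Fin.lt_succAbove_iff_le_castSucc, filter_ge_eq_Iic]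

section InsertPerm

variable {n : ℕ} (σ : Equiv.Perm (Fin n)) (k ℓ : Fin (n + 1))

@[simp]
lemma insertPerm_apply_self : insertPerm σ k ℓ k = ℓ := by
  simp [insertPerm]

@[simp]
lemma insertPerm_apply_succAbove (i : Fin n) :
    insertPerm σ k ℓ (k.succAbove i) = ℓ.succAbove (σ i) := by
  simp [insertPerm]

lemma insertPerm_inv : (insertPerm σ k ℓ)⁻¹ = insertPerm σ⁻¹ ℓ k := by
  ext x
  simp [insertPerm, Equiv.Perm.inv_def, Equiv.optionCongr_symm]

lemma card_insertPerm_succAbove_lt (a b : Fin n) :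
    #{ℓ | insertPerm σ k ℓ (k.succAbove a) < insertPerm σ k ℓ (k.succAbove b)} =
      if σ a < σ b then n + 1 else 0 := by
  simp only [insertPerm_apply_succAbove, Fin.succAbove_lt_succAbove_iff]
  split_ifs <;> simp [*]

end InsertPerm

lemma descNum_eq_card_s14 {n : ℕ} (π : Equiv.Perm (Fin (n + 1))) :
    descNum π = #{j : Fin n | π j.succ < π j.castSucc} := by
  symm
  refine card_bij (fun j _ => (j.castSucc, j.succ)) ?_ ?_ ?_
  · intro j hj
    simpa using hj
  · intro i _ j _ h
    simpa using congrArg Prod.fst h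
  · rintro ⟨p, q⟩ hpq
    simp only [mem_filter, mem_univ, true_and] at hpq
    obtain ⟨hpq, hdesc⟩ := hpq
    refine ⟨⟨p, by omega⟩, ?_, ?_⟩
    · have : (⟨p, by omega⟩ : Fin n).succ = q := Fin.ext (by simp [hpq])
      simpa [this] using hdesc
    · ext <;> simp [hpq]

def insertDescCount {n : ℕ} (σ : Equiv.Perm (Fin n)) (j : Fin n) (k : Fin (n + 1)) : ℕ :=
  #{ℓ | insertPerm σ k ℓ j.succ < insertPerm σ k ℓ j.castSucc}

section InsertDescCount

variable {n : ℕ} (σ : Equiv.Perm (Fin n))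

lemma insertDescCount_castSucc (j : Fin n) : insertDescCount σ j j.castSucc = n - σ j := by
  rw [insertDescCount, ← Fin.succAbove_castSucc_self j]
  simp only [insertPerm_apply_succAbove, insertPerm_apply_self, Fin.card_succAbove_lt]

lemma insertDescCount_succ (j : Fin n) : insertDescCount σ j j.succ = σ j + 1 := by
  rw [insertDescCount, ← Fin.succAbove_succ_self j]
  simp only [insertPerm_apply_succAbove, insertPerm_apply_self, Fin.card_lt_succAbove]

end InsertDescCount

section InsertDescCountSum

variable {m : ℕ} (σ : Equiv.Perm (Fin (m + 1)))

lemma insertDescCount_succ_of_lt {i : Fin m} {k : Fin (m + 2)} (hk : k < i.succ.castSucc) :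
    insertDescCount σ i.succ k = if σ i.succ < σ i.castSucc then m + 2 else 0 := by
  have hk' : k ≤ i.castSucc.castSucc := Fin.le_castSucc_iff.2 (Fin.succ_castSucc i ▸ hk)
  rw [insertDescCount, ← Fin.succ_castSucc, ← Fin.succAbove_of_le_castSucc k i.succ hk.le,
    ← Fin.succAbove_of_le_castSucc k i.castSucc hk', card_insertPerm_succAbove_lt]

lemma insertDescCount_castSucc_of_gt {i : Fin m} {k : Fin (m + 2)} (hk : i.succ.castSucc < k) :
    insertDescCount σ i.castSucc k = if σ i.succ < σ i.castSucc then m + 2 else 0 := by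
  have hk' : i.castSucc.castSucc < k := Fin.castSucc_lt_succ.trans (Fin.succ_castSucc i ▸ hk)
  rw [insertDescCount, Fin.succ_castSucc, ← Fin.succAbove_of_castSucc_lt k i.succ hk,
    ← Fin.succAbove_of_castSucc_lt k i.castSucc hk', card_insertPerm_succAbove_lt]

lemma sum_insertDescCount_Iio :
    ∑ j, ∑ k ∈ Iio j.castSucc, insertDescCount σ j k =
      ∑ i : Fin m, (i + 1) * if σ i.succ < σ i.castSucc then m + 2 else 0 := by
  rw [Fin.sum_univ_succ]
  simp only [Fin.castSucc_zero, Iio_eq_empty.2 fun k _ => Fin.zero_le k, sum_empty, zero_add]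
  refine sum_congr rfl fun i _ => ?_
  rw [sum_congr rfl fun k hk => insertDescCount_succ_of_lt σ (mem_Iio.1 hk), sum_const,
    Fin.card_Iio, smul_eq_mul]
  simp

lemma sum_insertDescCount_Ioi :
    ∑ j, ∑ k ∈ Ioi j.succ, insertDescCount σ j k =
      ∑ i : Fin m, (m - i) * if σ i.succ < σ i.castSucc then m + 2 else 0 := by
  rw [Fin.sum_univ_castSucc]
  simp only [Fin.succ_last, Ioi_eq_empty.2 fun k _ => Fin.le_last k, sum_empty, add_zero]
  refine sum_congr rfl fun i _ => ?_
  rw [sum_congr rfl fun k hk =>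
      insertDescCount_castSucc_of_gt σ (Fin.succ_castSucc i ▸ mem_Ioi.1 hk),
    sum_const, Fin.card_Ioi, smul_eq_mul]
  simp

end InsertDescCountSum

lemma sum_descNum_insertPerm_eq_sum_insertDescCount {n : ℕ} (σ : Equiv.Perm (Fin n)) :
    ∑ c : Fin (n + 1) × Fin (n + 1), descNum (insertPerm σ c.1 c.2) =
      ∑ j, ∑ k, insertDescCount σ j k := by
  simp only [descNum_eq_card_s14, insertDescCount, card_filter, Fintype.sum_prod_type]
  exact (sum_congr rfl fun k _ => sum_comm).trans sum_comm

theorem sum_descNum_insertPerm {n : ℕ} (σ : Equiv.Perm (Fin n)) :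
    ∑ c : Fin (n + 1) × Fin (n + 1), descNum (insertPerm σ c.1 c.2) =
      (n + 1) * (n * descNum σ + n) := by
  rw [sum_descNum_insertPerm_eq_sum_insertDescCount]
  cases n with
  | zero => simp
  | succ m =>
    have hadjacent (j : Fin (m + 1)) :
        insertDescCount σ j j.castSucc + insertDescCount σ j j.succ = m + 2 := by
      rw [insertDescCount_castSucc, insertDescCount_succ]
      have := (σ j).isLt
      omega
    have hdescents : ∑ i : Fin m, (if σ i.succ < σ i.castSucc then m + 2 else 0) =
        (m + 2) * descNum σ := by
      rw [descNum_eq_card_s14, sum_ite, sum_const_zero, add_zero, sum_const, smul_eq_mul, mul_comm]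
    calc ∑ j, ∑ k, insertDescCount σ j k
        = ∑ j, ∑ k ∈ Iio j.castSucc, insertDescCount σ j k +
            ∑ j, (insertDescCount σ j j.castSucc + insertDescCount σ j j.succ) +
            ∑ j, ∑ k ∈ Ioi j.succ, insertDescCount σ j k := by
          rw [sum_congr rfl fun j _ =>
            Fin.sum_univ_eq_sum_Iio_add_add_sum_Ioi (insertDescCount σ j) j]
          simp only [sum_add_distrib, add_assoc]
      _ = ∑ i : Fin m, ((i + 1) + (m - i)) * (if σ i.succ < σ i.castSucc then m + 2 else 0) +
            (m + 1) * (m + 2) := by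
          rw [sum_insertDescCount_Iio, sum_insertDescCount_Ioi, sum_congr rfl fun j _ => hadjacent j]
          simp only [sum_const, card_univ, Fintype.card_fin, smul_eq_mul, add_mul, sum_add_distrib]
          ring
      _ = (m + 1 + 1) * ((m + 1) * descNum σ + (m + 1)) := by
          rw [sum_congr rfl fun i _ => by rw [show (i : ℕ) + 1 + (m - i) = m + 1 by omega],
            ← mul_sum, hdescents]
          ring

theorem sum_descNum_insertPerm_inv {n : ℕ} (σ : Equiv.Perm (Fin n)) :
    ∑ c : Fin (n + 1) × Fin (n + 1), descNum (insertPerm σ c.1 c.2)⁻¹ =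
      (n + 1) * (n * descNum σ⁻¹ + n) := by
  rw [← sum_descNum_insertPerm σ⁻¹]
  exact Fintype.sum_equiv (Equiv.prodComm _ _) _ _ fun c => by rw [insertPerm_inv]; rfl

lemma average_eq_and_centered_average_eq {n d : ℕ} (f : Fin (n + 1) × Fin (n + 1) → ℕ)
    (hf : ∑ c, f c = (n + 1) * (n * d + n)) :
    (∑ c, (f c : ℝ)) / (n + 1) ^ 2 = d + ((n : ℝ) - d) / (n + 1) ∧
      (∑ c, ((n : ℝ) + 1) * ((f c : ℝ) - n / 2)) / (n + 1) ^ 2 =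
        n * ((d : ℝ) - ((n : ℝ) - 1) / 2) := by
  have hS : ∑ c, (f c : ℝ) = (n + 1) * (n * d + n) := by exact_mod_cast hf
  refine ⟨?_, ?_⟩
  · rw [hS]
    field_simp
    ring
  · rw [← mul_sum, sum_sub_distrib, sum_const, card_univ, Fintype.card_prod, Fintype.card_fin,
      nsmul_eq_mul, hS]
    field_simp
    push_cast
    ring

/-- Conditional expectations of the descent and inverse-descent counts after a uniform
insertion, and the resulting martingale property of `M_n = n (D_n - (n-1)/2, D'_n - (n-1)/2)`. -/
theorem stmt_14 (n : ℕ) (σ : Equiv.Perm (Fin n)) :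
    (∑ c : Fin (n + 1) × Fin (n + 1), (descNum (insertPerm σ c.1 c.2) : ℝ)) / (n + 1) ^ 2 =
        descNum σ + ((n : ℝ) - descNum σ) / (n + 1) ∧
    (∑ c : Fin (n + 1) × Fin (n + 1), (descNum (insertPerm σ c.1 c.2)⁻¹ : ℝ)) / (n + 1) ^ 2 =
        descNum σ⁻¹ + ((n : ℝ) - descNum σ⁻¹) / (n + 1) ∧
    (∑ c : Fin (n + 1) × Fin (n + 1),
        ((n : ℝ) + 1) * ((descNum (insertPerm σ c.1 c.2) : ℝ) - n / 2)) / (n + 1) ^ 2 =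
      (n : ℝ) * ((descNum σ : ℝ) - ((n : ℝ) - 1) / 2) ∧
    (∑ c : Fin (n + 1) × Fin (n + 1),
        ((n : ℝ) + 1) * ((descNum (insertPerm σ c.1 c.2)⁻¹ : ℝ) - n / 2)) / (n + 1) ^ 2 =
      (n : ℝ) * ((descNum σ⁻¹ : ℝ) - ((n : ℝ) - 1) / 2) := by
  obtain ⟨hD, hM⟩ := average_eq_and_centered_average_eq _ (sum_descNum_insertPerm σ)
  obtain ⟨hD', hM'⟩ := average_eq_and_centered_average_eq _ (sum_descNum_insertPerm_inv σ)
  exact ⟨hD, hD', hM, hM'⟩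
end

section
/- The sequence S_n = Σ_{k=0}^{n−1} [n brack n−k] ((n−k)!/n!)² c^k converges to e^{c/2} as n → ∞, for every fixed real c ≥ 0. -/
open Polynomial Filter

/-- Unsigned Stirling numbers of the first kind. -/
noncomputable def stirling1 (n k : ℕ) : ℕ := (ascPochhammer ℕ n).coeff k

/-!
Write `b(n, k) = [n brack n-k]`, so that `b(n+1, k+1) = b(n, k+1) + n b(n, k)`. Induction on this
recurrence gives `k! b(n, k) ≤ (n!/(n-k)!)²` and `n(n-1)⋯(n-2k+1) ≤ 2^k k! b(n, k) ≤ n^{2k}`.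
The first bound dominates the `k`-th term by `c^k / k!`; the second, together with
`n!/(n-k)! ~ n^k`, shows that it tends to `(c/2)^k / k!`. Tannery's theorem (dominated convergence
for series) then yields the limit `∑ (c/2)^k / k! = e^{c/2}`.
-/

open Nat Topology Asymptotics Finset

theorem stirling1_eq_stirlingFirst (n k : ℕ) : stirling1 n k = stirlingFirst n k := by
  induction n generalizing k with
  | zero => cases k <;> simp [stirling1, coeff_one]
  | succ n ih =>
    cases k with
    | zero => simp [stirling1, ascPochhammer_succ_left]
    | succ k =>
      simp only [stirling1] at ih
      simp [stirling1, ascPochhammer_succ_right, mul_add, coeff_mul_X, ih, stirlingFirst_succ_succ,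
        add_comm, mul_comm]

namespace Nat

/- `stirlingFirst (m + k) m` is `[n brack n-k]` for `n = m + k`; indexing by `m` avoids
truncated subtraction. -/

theorem factorial_mul_stirlingFirst_add_mul_sq_le (m k : ℕ) :
    k ! * stirlingFirst (m + k) m * m ! ^ 2 ≤ (m + k)! ^ 2 := by
  induction m generalizing k with
  | zero => cases k <;> simp
  | succ m ihm =>
    induction k with
    | zero => simp [stirlingFirst_self]
    | succ k ihk =>
      have hm := ihm (k + 1)
      rw [show m + 1 + (k + 1) = m + k + 1 + 1 by ring, stirlingFirst_succ_succ]
      rw [show m + 1 + k = m + k + 1 by ring] at ihk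
      rw [show m + (k + 1) = m + k + 1 by ring] at hm
      set N := m + k + 1 with hN
      calc (k + 1)! * (N * stirlingFirst N (m + 1) + stirlingFirst N m) * (m + 1)! ^ 2
          = (k + 1) * N * (k ! * stirlingFirst N (m + 1) * (m + 1)! ^ 2)
            + (m + 1) ^ 2 * ((k + 1)! * stirlingFirst N m * m ! ^ 2) := by
            rw [factorial_succ k, factorial_succ m]; ring
        _ ≤ (k + 1) * N * N ! ^ 2 + (m + 1) ^ 2 * N ! ^ 2 := by gcongr
        _ ≤ (N + 1) ^ 2 * N ! ^ 2 := by
            rw [← add_mul]; gcongr; rw [hN]; nlinarith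
        _ = (N + 1)! ^ 2 := by rw [factorial_succ N, mul_pow]

theorem two_pow_mul_factorial_mul_stirlingFirst_add_le (m k : ℕ) :
    2 ^ k * k ! * stirlingFirst (m + k) m ≤ (m + k) ^ (2 * k) := by
  induction m generalizing k with
  | zero => cases k <;> simp
  | succ m ihm =>
    induction k with
    | zero => simp [stirlingFirst_self]
    | succ k ihk =>
      have hm := ihm (k + 1)
      rw [show m + 1 + (k + 1) = m + k + 1 + 1 by ring, stirlingFirst_succ_succ]
      rw [show m + 1 + k = m + k + 1 by ring] at ihk
      rw [show m + (k + 1) = m + k + 1 by ring] at hm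
      set N := m + k + 1
      calc 2 ^ (k + 1) * (k + 1)! * (N * stirlingFirst N (m + 1) + stirlingFirst N m)
          = (2 * k + 2) * N * (2 ^ k * k ! * stirlingFirst N (m + 1))
            + 2 ^ (k + 1) * (k + 1)! * stirlingFirst N m := by
            rw [factorial_succ k]; ring
        _ ≤ (2 * k + 2) * N * N ^ (2 * k) + N ^ (2 * (k + 1)) := by gcongr
        _ = N ^ (2 * k + 2) + (2 * k + 2) * N ^ (2 * k + 1) := by ring
        _ ≤ (N + 1) ^ (2 * (k + 1)) := by
            have h := pow_add_mul_le_add_pow (a := N) (b := 1) N.zero_le (by omega) (2 * k + 2)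
            rwa [Nat.cast_id, mul_one, show 2 * k + 2 - 1 = 2 * k + 1 by omega] at h

theorem descFactorial_le_two_pow_mul_factorial_mul_stirlingFirst_add (m k : ℕ) :
    (m + k).descFactorial (2 * k) ≤ 2 ^ k * k ! * stirlingFirst (m + k) m := by
  induction m generalizing k with
  | zero => cases k <;> simp [descFactorial_eq_zero_iff_lt]
  | succ m ihm =>
    induction k with
    | zero => simp [stirlingFirst_self]
    | succ k ihk =>
      have hm := ihm (k + 1)
      rw [show m + 1 + (k + 1) = m + k + 1 + 1 by ring, stirlingFirst_succ_succ]
      rw [show m + 1 + k = m + k + 1 by ring] at ihk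
      rw [show m + (k + 1) = m + k + 1 by ring] at hm
      set N := m + k + 1
      have hstep : (N + 1) * (N - 2 * k) ≤ (N - 2 * k) * (N - (2 * k + 1)) + (2 * k + 2) * N := by
        rcases Nat.lt_or_ge N (2 * k + 1) with h | h
        · rw [Nat.sub_eq_zero_of_le (by omega : N ≤ 2 * k)]; simp
        · obtain ⟨a, ha⟩ := Nat.exists_eq_add_of_le h
          rw [ha, show 2 * k + 1 + a - 2 * k = a + 1 by omega,
            show 2 * k + 1 + a - (2 * k + 1) = a by omega]
          nlinarith
      calc (N + 1).descFactorial (2 * (k + 1))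
          = (N + 1) * (N - 2 * k) * N.descFactorial (2 * k) := by
            rw [show 2 * (k + 1) = 2 * k + 1 + 1 by ring, succ_descFactorial_succ,
              descFactorial_succ]; ring
        _ ≤ ((N - 2 * k) * (N - (2 * k + 1)) + (2 * k + 2) * N) * N.descFactorial (2 * k) := by
            gcongr
        _ = N.descFactorial (2 * (k + 1)) + (2 * k + 2) * N * N.descFactorial (2 * k) := by
            rw [show 2 * (k + 1) = 2 * k + 1 + 1 by ring, descFactorial_succ, descFactorial_succ]
            ring
        _ ≤ 2 ^ (k + 1) * (k + 1)! * stirlingFirst N m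
            + (2 * k + 2) * N * (2 ^ k * k ! * stirlingFirst N (m + 1)) := by gcongr
        _ = 2 ^ (k + 1) * (k + 1)! * (N * stirlingFirst N (m + 1) + stirlingFirst N m) := by
            rw [factorial_succ k]; ring

end Nat

theorem tendsto_descFactorial_div_pow (k : ℕ) :
    Tendsto (fun n : ℕ => (n.descFactorial k : ℝ) / n ^ k) atTop (𝓝 1) := by
  have hz : ∀ᶠ n : ℕ in atTop, (n : ℝ) ^ k ≠ 0 := by
    filter_upwards [eventually_ge_atTop 1] with n hn
    positivity
  exact (isEquivalent_iff_tendsto_one hz).mp (isEquivalent_descFactorial k)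

theorem isEquivalent_stirlingFirst_sub (k : ℕ) :
    (fun n : ℕ => (stirlingFirst n (n - k) : ℝ)) ~[atTop]
      fun n => (n : ℝ) ^ (2 * k) / (2 ^ k * k ! : ℝ) := by
  apply isEquivalent_of_tendsto_one
  refine tendsto_of_tendsto_of_tendsto_of_le_of_le' (tendsto_descFactorial_div_pow (2 * k))
    tendsto_const_nhds ?_ ?_ <;> filter_upwards [eventually_ge_atTop k] with n hn <;>
    rw [Pi.div_apply, div_div_eq_mul_div, mul_comm (stirlingFirst _ _ : ℝ)]
  · have h := descFactorial_le_two_pow_mul_factorial_mul_stirlingFirst_add (n - k) k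
    rw [Nat.sub_add_cancel hn] at h
    exact div_le_div_of_nonneg_right (mod_cast h) (by positivity)
  · have h := two_pow_mul_factorial_mul_stirlingFirst_add_le (n - k) k
    rw [Nat.sub_add_cancel hn] at h
    exact div_le_one_of_le₀ (mod_cast h) (by positivity)

theorem tendsto_stirlingFirst_sub_mul_sq (k : ℕ) :
    Tendsto (fun n : ℕ => (stirlingFirst n (n - k) : ℝ) * ((n - k)! / n ! : ℝ) ^ 2) atTop
      (𝓝 (1 / (2 ^ k * k ! : ℝ))) := by
  have hequiv := (isEquivalent_stirlingFirst_sub k).div ((isEquivalent_descFactorial k).pow 2)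
  have hlim : Tendsto (fun n : ℕ => (n : ℝ) ^ (2 * k) / (2 ^ k * k ! : ℝ) / ((n : ℝ) ^ k) ^ 2)
      atTop (𝓝 (1 / (2 ^ k * k ! : ℝ))) := by
    refine tendsto_const_nhds.congr' ?_
    filter_upwards [eventually_ge_atTop 1] with n hn
    have : (n : ℝ) ≠ 0 := by positivity
    field_simp
    ring
  refine (hequiv.symm.tendsto_nhds hlim).congr' ?_
  filter_upwards [eventually_ge_atTop k] with n hn
  have hfac : ((n - k)! : ℝ) * n.descFactorial k = n ! := mod_cast factorial_mul_descFactorial hn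
  simp only [Pi.div_apply, Pi.pow_apply, ← hfac]
  have : ((n - k)! : ℝ) ≠ 0 := by positivity
  field_simp

theorem stirlingFirst_sub_mul_sq_le {n k : ℕ} (hk : k ≤ n) :
    (stirlingFirst n (n - k) : ℝ) * ((n - k)! / n ! : ℝ) ^ 2 ≤ 1 / k ! := by
  obtain ⟨m, rfl⟩ := Nat.exists_eq_add_of_le' hk
  have h : (k ! * stirlingFirst (m + k) m * m ! ^ 2 : ℝ) ≤ (m + k)! ^ 2 :=
    mod_cast factorial_mul_stirlingFirst_add_mul_sq_le m k
  rw [Nat.add_sub_cancel, div_pow, le_div_iff₀ (by positivity)]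
  calc _ = (k ! * stirlingFirst (m + k) m * m ! ^ 2 : ℝ) / (m + k)! ^ 2 := by ring
    _ ≤ 1 := div_le_one_of_le₀ h (by positivity)

theorem tendsto_sum_range_of_dominated_convergence {G : Type*} [NormedAddCommGroup G]
    [CompleteSpace G] {f : ℕ → ℕ → G} {g : ℕ → G} {bound : ℕ → ℝ} (h_sum : Summable bound)
    (h_lim : ∀ k, Tendsto (f · k) atTop (𝓝 (g k))) (h_bound : ∀ n, ∀ k < n, ‖f n k‖ ≤ bound k) :
    Tendsto (fun n => ∑ k ∈ range n, f n k) atTop (𝓝 (∑' k, g k)) := by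
  have hsum (n : ℕ) : ∑ k ∈ range n, f n k = ∑' k, (range n : Set ℕ).indicator (f n) k :=
    sum_eq_tsum_indicator _ _
  simp only [hsum]
  refine tendsto_tsum_of_dominated_convergence h_sum (fun k => (h_lim k).congr' ?_)
    (Eventually.of_forall fun n k => ?_)
  · filter_upwards [eventually_gt_atTop k] with n hn
    rw [Set.indicator_of_mem (by simpa using hn)]
  · by_cases hk : k < n
    · rw [Set.indicator_of_mem (by simpa using hk)]
      exact h_bound n k hk
    · rw [Set.indicator_of_notMem (by simpa using hk), norm_zero]
      exact (norm_nonneg _).trans (h_bound (k + 1) k k.lt_succ_self)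

theorem stmt_17 (c : ℝ) (hc : 0 ≤ c) :
    Tendsto (fun n : ℕ => ∑ k ∈ Finset.range n,
        (stirling1 n (n - k) : ℝ) *
          ((Nat.factorial (n - k) : ℝ) / Nat.factorial n) ^ 2 * c ^ k)
      atTop (nhds (Real.exp (c / 2))) := by
  have hexp : HasSum (fun k : ℕ => 1 / (2 ^ k * k ! : ℝ) * c ^ k) (Real.exp (c / 2)) := by
    rw [Real.exp_eq_exp_ℝ]
    have e : (fun k : ℕ => 1 / (2 ^ k * k ! : ℝ) * c ^ k) = fun k => (c / 2) ^ k / k ! := by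
      funext k; rw [div_pow]; field_simp
    rw [e]
    exact NormedSpace.expSeries_div_hasSum_exp (c / 2)
  rw [← hexp.tsum_eq]
  simp_rw [stirling1_eq_stirlingFirst]
  refine tendsto_sum_range_of_dominated_convergence (Real.summable_pow_div_factorial c)
    (fun k => (tendsto_stirlingFirst_sub_mul_sq k).mul_const _) fun n k hk => ?_
  rw [Real.norm_of_nonneg (by positivity)]
  calc _ ≤ 1 / k ! * c ^ k := by gcongr; exact stirlingFirst_sub_mul_sq_le hk.le
    _ = c ^ k / k ! := by ring
end
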